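/- arXiv:2210.00253 — 3 statements merged into one kernel-verified Lean document; each statement's English description precedes it below -/
import Mathlib

section
/- Let V be a finite-dimensional real inner product space, J : V → ℝ^m linear with adjoint J*, λ > 0, F ∈ ℝ^m, g := J* F (assume g ≠ 0), and θ(s) = ‖F + Js‖² + λ‖s‖². Then the minimizer s* of θ satisfies θ(0) − θ(s*) ≥ ‖g‖² / (‖J‖² + λ), where ‖J‖ is the operator norm of J. -/
/-! Compare the minimum with the value at the Cauchy point `s = -(‖J‖² + λ)⁻¹ g` on the
steepest-descent ray. Along `s = -t g` the model is `‖F‖² - 2t‖g‖² + t²(‖Jg‖² + λ‖g‖²)`,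
since `⟪F, J g⟫ = ⟪J* F, g⟫ = ‖g‖²`; bounding `‖Jg‖ ≤ ‖J‖‖g‖` and taking
`t = (‖J‖² + λ)⁻¹` gives a decrease of at least `‖g‖² / (‖J‖² + λ)`. -/

open RealInnerProductSpace
open ContinuousLinearMap

section CauchyStep

variable {V W : Type*} [NormedAddCommGroup V] [InnerProductSpace ℝ V] [CompleteSpace V]
  [NormedAddCommGroup W] [InnerProductSpace ℝ W] [CompleteSpace W]

theorem inner_apply_adjoint_self (J : V →L[ℝ] W) (F : W) :
    ⟪F, J (adjoint J F)⟫ = ‖adjoint J F‖ ^ 2 := by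
  rw [← adjoint_inner_left, real_inner_self_eq_norm_sq]

theorem regularized_sq_along_neg_adjoint_le (J : V →L[ℝ] W) (F : W) (lam t : ℝ) :
    ‖F + J (-t • adjoint J F)‖ ^ 2 + lam * ‖-t • adjoint J F‖ ^ 2 ≤
      ‖F‖ ^ 2 - 2 * t * ‖adjoint J F‖ ^ 2 + t ^ 2 * (‖J‖ ^ 2 + lam) * ‖adjoint J F‖ ^ 2 := by
  set g := adjoint J F
  have hJg : ‖J g‖ ^ 2 ≤ ‖J‖ ^ 2 * ‖g‖ ^ 2 := by
    rw [← mul_pow]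
    exact pow_le_pow_left₀ (norm_nonneg _) (J.le_opNorm g) 2
  have hexpand : ‖F + J (-t • g)‖ ^ 2 + lam * ‖-t • g‖ ^ 2 =
      ‖F‖ ^ 2 - 2 * t * ‖g‖ ^ 2 + t ^ 2 * (‖J g‖ ^ 2 + lam * ‖g‖ ^ 2) := by
    rw [map_smul, norm_add_sq_real, inner_smul_right, inner_apply_adjoint_self, norm_smul,
      norm_smul, mul_pow, mul_pow, Real.norm_eq_abs, sq_abs]
    ring
  rw [hexpand]
  nlinarith [mul_le_mul_of_nonneg_left hJg (sq_nonneg t)]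

end CauchyStep

theorem stmt_1_general {V : Type*} [NormedAddCommGroup V] [InnerProductSpace ℝ V]
    [FiniteDimensional ℝ V] {m : ℕ}
    (J : V →L[ℝ] EuclideanSpace ℝ (Fin m)) (lam : ℝ) (hlam : 0 < lam)
    (F : EuclideanSpace ℝ (Fin m)) (g : V)
    (hg : g = (ContinuousLinearMap.adjoint J) F)
    (θ : V → ℝ) (hθ : ∀ s : V, θ s = ‖F + J s‖ ^ 2 + lam * ‖s‖ ^ 2)
    (sstar : V) (hmin : ∀ t : V, θ sstar ≤ θ t) :
    θ 0 - θ sstar ≥ ‖g‖ ^ 2 / (‖J‖ ^ 2 + lam) := by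
  set A := ‖J‖ ^ 2 + lam
  have hA : 0 < A := by positivity
  have hcauchy : θ (-A⁻¹ • g) ≤ ‖F‖ ^ 2 - ‖g‖ ^ 2 / A := by
    have h := regularized_sq_along_neg_adjoint_le J F lam A⁻¹
    rw [← hg] at h
    rw [hθ]
    convert h using 1
    field_simp
    ring
  have hθ0 : θ 0 = ‖F‖ ^ 2 := by simp [hθ]
  linarith [hmin (-A⁻¹ • g)]

theorem stmt_1 {V : Type*} [NormedAddCommGroup V] [InnerProductSpace ℝ V]
    [FiniteDimensional ℝ V] {m : ℕ}
    (J : V →L[ℝ] EuclideanSpace ℝ (Fin m)) (lam : ℝ) (hlam : 0 < lam)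
    (F : EuclideanSpace ℝ (Fin m)) (g : V)
    (hg : g = (ContinuousLinearMap.adjoint J) F) (hg0 : g ≠ 0)
    (θ : V → ℝ) (hθ : ∀ s : V, θ s = ‖F + J s‖ ^ 2 + lam * ‖s‖ ^ 2)
    (sstar : V) (hmin : ∀ t : V, θ sstar ≤ θ t) :
    θ 0 - θ sstar ≥ ‖g‖ ^ 2 / (‖J‖ ^ 2 + lam) :=
  stmt_1_general J lam hlam F g hg θ hθ sstar hmin
end

section
/- Let V be a finite-dimensional real inner product space, J : V → ℝ^m linear with adjoint J*, λ > 0, F ∈ ℝ^m, and g := J* F. If s ∈ V satisfies (J* ∘ J + λ·id)(s) = −g, then −⟨g, s⟩ ≥ ‖g‖² / (‖J‖² + λ). -/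
/-!
Pairing the normal equation `J†J s + λ s = -g` with `s` gives `-⟪g, s⟫ = ‖J s‖² + λ‖s‖²`,
while `‖g‖² = ‖J†J s‖² + 2λ‖J s‖² + λ²‖s‖²`. With `‖J†J s‖ ≤ ‖J‖‖J s‖` and
`‖J s‖ ≤ ‖J‖‖s‖`, the difference `(‖J‖² + λ)(-⟪g, s⟫) - ‖g‖²` is at least
`λ(‖J‖²‖s‖² - ‖J s‖²) ≥ 0`.
-/

open RealInnerProductSpace
open scoped InnerProduct

namespace ContinuousLinearMap

variable {V W : Type*} [NormedAddCommGroup V] [InnerProductSpace ℝ V] [CompleteSpace V]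
  [NormedAddCommGroup W] [InnerProductSpace ℝ W] [CompleteSpace W]

theorem inner_adjoint_apply_add_smul_self (J : V →L[ℝ] W) (lam : ℝ) (s : V) :
    ⟪(J†) (J s) + lam • s, s⟫ = ‖J s‖ ^ 2 + lam * ‖s‖ ^ 2 := by
  rw [inner_add_left, adjoint_inner_left, real_inner_smul_left, real_inner_self_eq_norm_sq,
    real_inner_self_eq_norm_sq]

theorem norm_adjoint_apply_add_smul_sq (J : V →L[ℝ] W) (lam : ℝ) (s : V) :
    ‖(J†) (J s) + lam • s‖ ^ 2 = ‖(J†) (J s)‖ ^ 2 + 2 * lam * ‖J s‖ ^ 2 + lam ^ 2 * ‖s‖ ^ 2 := by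
  rw [norm_add_sq_real, real_inner_smul_right, adjoint_inner_left, real_inner_self_eq_norm_sq,
    norm_smul, Real.norm_eq_abs, mul_pow, sq_abs]
  ring

theorem norm_adjoint_apply_add_smul_sq_le (J : V →L[ℝ] W) {lam : ℝ} (hlam : 0 ≤ lam) (s : V) :
    ‖(J†) (J s) + lam • s‖ ^ 2 ≤ (‖J‖ ^ 2 + lam) * ⟪(J†) (J s) + lam • s, s⟫ := by
  have hJJs : ‖(J†) (J s)‖ ^ 2 ≤ ‖J‖ ^ 2 * ‖J s‖ ^ 2 := by
    rw [← mul_pow]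
    gcongr
    simpa only [adjoint.norm_map] using (J†).le_opNorm (J s)
  have hJs : ‖J s‖ ^ 2 ≤ ‖J‖ ^ 2 * ‖s‖ ^ 2 := by
    rw [← mul_pow]
    gcongr
    exact J.le_opNorm s
  rw [norm_adjoint_apply_add_smul_sq, inner_adjoint_apply_add_smul_self]
  linear_combination hJJs + lam * hJs

end ContinuousLinearMap

theorem stmt_3_general {V : Type*} [NormedAddCommGroup V] [InnerProductSpace ℝ V]
    [FiniteDimensional ℝ V] {m : ℕ}
    (J : V →L[ℝ] EuclideanSpace ℝ (Fin m)) (lam : ℝ) (hlam : 0 < lam)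
    (g : V)
    (s : V) (hs : (ContinuousLinearMap.adjoint J) (J s) + lam • s = -g) :
    -⟪g, s⟫ ≥ ‖g‖ ^ 2 / (‖J‖ ^ 2 + lam) := by
  obtain rfl : g = -((J†) (J s) + lam • s) := by rw [hs, neg_neg]
  rw [inner_neg_left, neg_neg, norm_neg, ge_iff_le, div_le_iff₀ (by positivity), mul_comm]
  exact J.norm_adjoint_apply_add_smul_sq_le hlam.le s

theorem stmt_3 {V : Type*} [NormedAddCommGroup V] [InnerProductSpace ℝ V]
    [FiniteDimensional ℝ V] {m : ℕ}
    (J : V →L[ℝ] EuclideanSpace ℝ (Fin m)) (lam : ℝ) (hlam : 0 < lam)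
    (F : EuclideanSpace ℝ (Fin m)) (g : V)
    (hg : g = (ContinuousLinearMap.adjoint J) F)
    (s : V) (hs : (ContinuousLinearMap.adjoint J) (J s) + lam • s = -g) :
    -⟪g, s⟫ ≥ ‖g‖ ^ 2 / (‖J‖ ^ 2 + lam) :=
  stmt_3_general J lam hlam g s hs
end

section
/- Let V be a finite-dimensional real inner product space, J : V → ℝ^m linear with adjoint J* and operator norm ‖J‖ ≤ M, λ > 0, F ∈ ℝ^m, g := J*F, and s the solution of (J*J + λ I)s = −g. If moreover f(y) ≤ f(x) + ⟨g, s⟩ + (L/2)‖s‖² holds (descent-type inequality with reals f(x), f(y), L > 0), and λ ≥ κ := (L/2 + √(L²/4 + 2(1−η)LM²))/(2(1−η)) with η ∈ (0,1), then f(x) − f(y) ≥ (η/2)(θ(0) − θ(s)), where θ(s) = ‖F + Js‖² + λ‖s‖². -/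
/-!
Pairing the normal equation `(J*J + λ) s = -g` with `s` gives `⟪g, s⟫ = -(‖J s‖² + λ‖s‖²)`, and expanding
`‖F + J s‖²` shows that the model decrease `θ 0 - θ s` is this same quantity `‖J s‖² + λ‖s‖²`.
The descent inequality then reduces the claim to `L ‖s‖² ≤ (2 - η) λ ‖s‖²`, and the choice of `κ`
guarantees `L ≤ 2 (1 - η) κ ≤ (2 - η) λ`.
-/

open RealInnerProductSpace

section NormalEquation

variable {V W : Type*} [NormedAddCommGroup V] [InnerProductSpace ℝ V] [CompleteSpace V]
  [NormedAddCommGroup W] [InnerProductSpace ℝ W] [CompleteSpace W]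

theorem inner_adjoint_apply_eq_of_normal_eq (J : V →L[ℝ] W) (F : W) (lam : ℝ) (s : V)
    (hs : J.adjoint (J s) + lam • s = -J.adjoint F) :
    ⟪J.adjoint F, s⟫ = -(‖J s‖ ^ 2 + lam * ‖s‖ ^ 2) := by
  have h := congrArg (⟪·, s⟫) hs
  simp only [inner_add_left, inner_smul_left, inner_neg_left, ContinuousLinearMap.adjoint_inner_left,
    real_inner_self_eq_norm_sq, conj_trivial] at h
  rw [ContinuousLinearMap.adjoint_inner_left]
  linarith

theorem sq_norm_sub_model_eq_of_normal_eq (J : V →L[ℝ] W) (F : W) (lam : ℝ) (s : V)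
    (hs : J.adjoint (J s) + lam • s = -J.adjoint F) :
    ‖F‖ ^ 2 - (‖F + J s‖ ^ 2 + lam * ‖s‖ ^ 2) = ‖J s‖ ^ 2 + lam * ‖s‖ ^ 2 := by
  have h := inner_adjoint_apply_eq_of_normal_eq J F lam s hs
  rw [ContinuousLinearMap.adjoint_inner_left] at h
  rw [norm_add_sq_real, h]
  ring

end NormalEquation

theorem le_two_sub_mul_of_kappa_le {L η M lam : ℝ} (hL : 0 ≤ L) (hη0 : 0 ≤ η) (hη1 : η < 1)
    (hlam : (L / 2 + √(L ^ 2 / 4 + 2 * (1 - η) * L * M ^ 2)) / (2 * (1 - η)) ≤ lam) :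
    L ≤ (2 - η) * lam := by
  have hsqrt : L / 2 ≤ √(L ^ 2 / 4 + 2 * (1 - η) * L * M ^ 2) := by
    apply Real.le_sqrt_of_sq_le
    have : 0 ≤ (1 - η) * L * M ^ 2 := mul_nonneg (mul_nonneg (by linarith) hL) (sq_nonneg M)
    linarith
  rw [div_le_iff₀ (by linarith)] at hlam
  nlinarith

theorem stmt_15_general {V : Type*} [NormedAddCommGroup V] [InnerProductSpace ℝ V]
    [FiniteDimensional ℝ V] {m : ℕ}
    (J : V →L[ℝ] EuclideanSpace ℝ (Fin m)) (M : ℝ)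
    (lam : ℝ)
    (F : EuclideanSpace ℝ (Fin m)) (g : V)
    (hg : g = (ContinuousLinearMap.adjoint J) F)
    (s : V) (hs : (ContinuousLinearMap.adjoint J) (J s) + lam • s = -g)
    (fx fy L η : ℝ) (hL : 0 < L) (hη : η ∈ Set.Ioo (0 : ℝ) 1)
    (hdesc : fy ≤ fx + ⟪g, s⟫ + L / 2 * ‖s‖ ^ 2)
    (κ : ℝ)
    (hκ : κ = (L / 2 + Real.sqrt (L ^ 2 / 4 + 2 * (1 - η) * L * M ^ 2)) /
      (2 * (1 - η)))
    (hlamκ : κ ≤ lam)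
    (θ : V → ℝ) (hθ : ∀ t : V, θ t = ‖F + J t‖ ^ 2 + lam * ‖t‖ ^ 2) :
    fx - fy ≥ η / 2 * (θ 0 - θ s) := by
  subst hg hκ
  have hinner := inner_adjoint_apply_eq_of_normal_eq J F lam s hs
  have hdecrease : θ 0 - θ s = ‖J s‖ ^ 2 + lam * ‖s‖ ^ 2 := by
    rw [hθ, hθ, map_zero, add_zero, norm_zero, ← sq_norm_sub_model_eq_of_normal_eq J F lam s hs]
    ring
  have hLlam := le_two_sub_mul_of_kappa_le hL.le hη.1.le hη.2 hlamκ
  rw [hdecrease, ge_iff_le]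
  calc η / 2 * (‖J s‖ ^ 2 + lam * ‖s‖ ^ 2)
      ≤ ‖J s‖ ^ 2 + lam * ‖s‖ ^ 2 - L / 2 * ‖s‖ ^ 2 := by
        nlinarith [mul_le_mul_of_nonneg_right hLlam (sq_nonneg ‖s‖),
          mul_nonneg (by linarith [hη.2] : (0 : ℝ) ≤ 2 - η) (sq_nonneg ‖J s‖)]
    _ ≤ fx - fy := by linarith

theorem stmt_15 {V : Type*} [NormedAddCommGroup V] [InnerProductSpace ℝ V]
    [FiniteDimensional ℝ V] {m : ℕ}
    (J : V →L[ℝ] EuclideanSpace ℝ (Fin m)) (M : ℝ) (hM : 0 < M)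
    (hJM : ‖J‖ ≤ M) (lam : ℝ) (hlam : 0 < lam)
    (F : EuclideanSpace ℝ (Fin m)) (g : V)
    (hg : g = (ContinuousLinearMap.adjoint J) F)
    (s : V) (hs : (ContinuousLinearMap.adjoint J) (J s) + lam • s = -g)
    (fx fy L η : ℝ) (hL : 0 < L) (hη : η ∈ Set.Ioo (0 : ℝ) 1)
    (hdesc : fy ≤ fx + ⟪g, s⟫ + L / 2 * ‖s‖ ^ 2)
    (κ : ℝ)
    (hκ : κ = (L / 2 + Real.sqrt (L ^ 2 / 4 + 2 * (1 - η) * L * M ^ 2)) /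
      (2 * (1 - η)))
    (hlamκ : κ ≤ lam)
    (θ : V → ℝ) (hθ : ∀ t : V, θ t = ‖F + J t‖ ^ 2 + lam * ‖t‖ ^ 2) :
    fx - fy ≥ η / 2 * (θ 0 - θ s) :=
  stmt_15_general J M lam F g hg s hs fx fy L η hL hη hdesc κ hκ hlamκ θ hθ
end
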